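/- arXiv:2304.08407 — 4 statements merged into one kernel-verified Lean document; each statement's English description precedes it below -/
import Mathlib

section
/- MacLaurin inequality: if λ ∈ Γ_k := {λ ∈ ℝ^n : S_i(λ) > 0 for all 1 ≤ i ≤ k} and 1 ≤ l ≤ k ≤ n, then (S_k(λ)/C(n,k))^{1/k} ≤ (S_l(λ)/C(n,l))^{1/l}. -/
/-!
Write `E_j = S_j / C(N, j)` for the normalized elementary symmetric means of `N` reals. Newton's
inequalities `E_i E_{i+2} ≤ E_{i+1}²` hold for all real inputs, and on `Γ_k`, where `E_0 = 1` and
`E_1, …, E_k > 0`, they give `E_{j+1}^j ≤ E_j^{j+1}`, i.e. `E_j^{1/j}` is nonincreasing in `j`.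

Newton's inequality is proved by induction on `N`. The derivative of `∏ (X - λ_a)` has `N - 1`
real roots (Rolle) whose means `E_0, …, E_{N-1}` are those of `λ`, which reduces to `N = i + 2`.
There, if no `λ_a` vanishes, passing to `1/λ` reverses the means up to the factor `∏ λ_a`, which
reduces to `E_0 E_2 ≤ E_1²`, i.e. Cauchy–Schwarz `(∑ λ_a)² ≤ N ∑ λ_a²`.
-/

open scoped BigOperators
noncomputable section

/-- The `k`-th elementary symmetric function of `lam` over an index set `s`. -/
def esymmOn {n : ℕ} (s : Finset (Fin n)) (k : ℕ) (lam : Fin n → ℝ) : ℝ :=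
  ∑ t ∈ s.powersetCard k, ∏ i ∈ t, lam i

/-- The `k`-th elementary symmetric polynomial `S_k` on `ℝ^n`. -/
def esymm' (n k : ℕ) (lam : Fin n → ℝ) : ℝ := esymmOn Finset.univ k lam

/-- The Gårding cone `Γ_k = {λ : S_i(λ) > 0, 1 ≤ i ≤ k}`. -/
def Gamma (n k : ℕ) : Set (Fin n → ℝ) :=
  {lam | ∀ i : ℕ, 1 ≤ i → i ≤ k → 0 < esymm' n i lam}

open Finset Polynomial

-- For `j > card M` this is `0`, both numerator and denominator being `0`.
def esymmMean (M : Multiset ℝ) (j : ℕ) : ℝ :=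
  M.esymm j / (Multiset.card M).choose j

theorem Multiset.esymm_zero {R : Type*} [CommSemiring R] (M : Multiset R) : M.esymm 0 = 1 := by
  simp [Multiset.esymm, Multiset.powersetCard_zero_left]

theorem esymmMean_zero (M : Multiset ℝ) : esymmMean M 0 = 1 := by
  simp [esymmMean, Multiset.esymm_zero]

section Fintype

variable {ι : Type*} [Fintype ι]

theorem two_mul_esymm_two (f : ι → ℝ) :
    2 * (univ.val.map f).esymm 2 = (∑ i, f i) ^ 2 - ∑ i, f i ^ 2 := by
  have h := congrArg (MvPolynomial.aeval f) (MvPolynomial.mul_esymm_eq_sum ι ℝ 2)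
  rw [map_mul, map_natCast, MvPolynomial.aeval_esymm_eq_multiset_esymm, Nat.cast_ofNat] at h
  rw [h, sum_filter, Nat.sum_antidiagonal_succ, Nat.sum_antidiagonal_succ]
  simp [MvPolynomial.psum, MvPolynomial.esymm_one]
  ring

theorem esymmMean_two_le_sq (f : ι → ℝ) :
    esymmMean (univ.val.map f) 2 ≤ esymmMean (univ.val.map f) 1 ^ 2 := by
  have hsq := two_mul_esymm_two f
  have hcs : (∑ i, f i) ^ 2 ≤ Fintype.card ι * ∑ i, f i ^ 2 := by
    simpa using sq_sum_le_card_mul_sum_sq (s := univ) (f := f)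
  have he1 : (univ.val.map f).esymm 1 = ∑ i, f i := by
    simp [esymm_map_val, powersetCard_one]
  rw [esymmMean, esymmMean, he1, Multiset.card_map, card_val, card_univ, Nat.cast_choose_two,
    Nat.choose_one_right]
  set N := Fintype.card ι
  rcases Nat.lt_or_ge N 2 with hN | hN
  · have hchoose : (N : ℝ) * (N - 1) / 2 = 0 := by interval_cases N <;> norm_num
    rw [hchoose, div_zero]
    positivity
  · have hN' : (2 : ℝ) ≤ N := by exact_mod_cast hN
    rw [div_pow, div_le_div_iff₀ (by nlinarith) (by positivity)]
    nlinarith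

theorem esymm_card_sub (f : ι → ℝ) (hf : ∀ a, f a ≠ 0) {j : ℕ} (hj : j ≤ Fintype.card ι) :
    (univ.val.map f).esymm (Fintype.card ι - j) = (univ.val.map f⁻¹).esymm j * ∏ a, f a := by
  classical
  rw [esymm_map_val, esymm_map_val, sum_mul]
  refine (sum_nbij' (·ᶜ) (·ᶜ) (fun t ht => ?_) (fun s hs => ?_) (by simp) (by simp)
    fun t _ => ?_).symm
  · rw [mem_powersetCard_univ] at ht ⊢
    rw [card_compl, ht]
  · rw [mem_powersetCard_univ] at hs ⊢
    rw [card_compl, hs]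
    omega
  · rw [← prod_mul_prod_compl t f, ← mul_assoc, ← prod_mul_distrib]
    simp [hf]

theorem esymmMean_card_sub (f : ι → ℝ) (hf : ∀ a, f a ≠ 0) {j : ℕ} (hj : j ≤ Fintype.card ι) :
    esymmMean (univ.val.map f) (Fintype.card ι - j)
      = esymmMean (univ.val.map f⁻¹) j * ∏ a, f a := by
  simp only [esymmMean, Multiset.card_map, card_val, card_univ, esymm_card_sub f hf hj,
    Nat.choose_symm hj]
  ring

theorem esymmMean_mul_le_sq_of_card_eq (f : ι → ℝ) {i : ℕ} (hcard : Fintype.card ι = i + 2) :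
    esymmMean (univ.val.map f) i * esymmMean (univ.val.map f) (i + 2)
      ≤ esymmMean (univ.val.map f) (i + 1) ^ 2 := by
  by_cases hf : ∀ a, f a ≠ 0
  · have h (j : ℕ) (hj : j ≤ 2) := esymmMean_card_sub f hf (j := j) (by omega)
    have h2 := h 2 le_rfl
    have h1 := h 1 one_le_two
    have h0 := h 0 zero_le_two
    simp only [hcard, Nat.add_sub_cancel, Nat.sub_zero, show i + 2 - 1 = i + 1 by omega,
      esymmMean_zero] at h2 h1 h0
    rw [h2, h1, h0]
    have := esymmMean_two_le_sq f⁻¹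
    calc _ = (∏ a, f a) ^ 2 * esymmMean (univ.val.map f⁻¹) 2 := by ring
      _ ≤ (∏ a, f a) ^ 2 * esymmMean (univ.val.map f⁻¹) 1 ^ 2 := by gcongr
      _ = _ := by ring
  · push Not at hf
    obtain ⟨a, ha⟩ := hf
    have htop : esymmMean (univ.val.map f) (i + 2) = 0 := by
      rw [esymmMean, esymm_map_val, ← hcard, ← card_univ, powersetCard_self, sum_singleton,
        prod_eq_zero (mem_univ a) ha, zero_div]
    rw [htop, mul_zero]
    positivity

end Fintype

section Derivative

variable (M : Multiset ℝ)

theorem card_roots_derivative_prod_X_sub_C :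
    Multiset.card (derivative (M.map (X - C ·)).prod).roots = Multiset.card M - 1 := by
  have hroots := card_roots_le_derivative (M.map (X - C ·)).prod
  have hdeg := natDegree_derivative_le (M.map (X - C ·)).prod
  have hcard := card_roots' (derivative (M.map (X - C ·)).prod)
  rw [roots_multiset_prod_X_sub_C] at hroots
  rw [natDegree_multiset_prod_X_sub_C_eq_card] at hdeg
  omega

theorem natDegree_derivative_prod_X_sub_C :
    (derivative (M.map (X - C ·)).prod).natDegree = Multiset.card M - 1 := by
  have hdeg := natDegree_derivative_le (M.map (X - C ·)).prod
  have hcard := card_roots' (derivative (M.map (X - C ·)).prod)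
  rw [natDegree_multiset_prod_X_sub_C_eq_card] at hdeg
  rw [card_roots_derivative_prod_X_sub_C] at hcard
  omega

theorem card_mul_esymm_roots_derivative_prod_X_sub_C {j : ℕ} (hj : j < Multiset.card M) :
    (Multiset.card M : ℝ) * (derivative (M.map (X - C ·)).prod).roots.esymm j
      = (Multiset.card M - j : ℕ) * M.esymm j := by
  have hdeg := natDegree_derivative_prod_X_sub_C M
  have hcard := card_roots_derivative_prod_X_sub_C M
  set N := Multiset.card M
  set Q := derivative (M.map (X - C ·)).prod
  have hcoeff (j : ℕ) (hj : j < N) :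
      Q.coeff (N - 1 - j) = (-1) ^ j * M.esymm j * (N - j : ℕ) := by
    have hsucc : N - 1 - j + 1 = N - j := by omega
    rw [coeff_derivative, hsucc, Multiset.prod_X_sub_C_coeff M (by omega),
      show N - (N - j) = j by omega, ← Nat.cast_add_one, hsucc]
  have hvieta (j : ℕ) (hj : j < N) :
      Q.coeff (N - 1 - j) = Q.leadingCoeff * (-1) ^ j * Q.roots.esymm j := by
    rw [coeff_eq_esymm_roots_of_card (hcard.trans hdeg.symm) (by omega), hdeg,
      show N - 1 - (N - 1 - j) = j by omega]
  have hlead : Q.leadingCoeff = N := by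
    simpa [Multiset.esymm_zero] using (hvieta 0 (by omega)).symm.trans (hcoeff 0 (by omega))
  have := (hvieta j hj).symm.trans (hcoeff j hj)
  rw [hlead] at this
  refine mul_left_cancel₀ (pow_ne_zero j (neg_ne_zero.mpr one_ne_zero)) ?_
  linear_combination this

theorem esymmMean_roots_derivative_prod_X_sub_C {j : ℕ} (hj : j < Multiset.card M) :
    esymmMean (derivative (M.map (X - C ·)).prod).roots j = esymmMean M j := by
  have hkey := card_mul_esymm_roots_derivative_prod_X_sub_C M hj
  rw [esymmMean, esymmMean, card_roots_derivative_prod_X_sub_C]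
  set N := Multiset.card M
  have hchoose : (N : ℝ) * (N - 1).choose j = (N - j : ℕ) * N.choose j := by
    have := Nat.choose_mul_succ_eq (N - 1) j
    rw [Nat.sub_add_cancel (by omega)] at this
    rw [mul_comm]
    exact_mod_cast this.trans (mul_comm _ _)
  rw [div_eq_div_iff (by exact_mod_cast (Nat.choose_pos (by omega)).ne')
    (by exact_mod_cast (Nat.choose_pos hj.le).ne')]
  refine mul_left_cancel₀ (Nat.cast_ne_zero.mpr (by omega) : (N : ℝ) ≠ 0) ?_
  linear_combination (N.choose j : ℝ) * hkey - M.esymm j * hchoose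

end Derivative

theorem esymmMean_mul_le_sq (M : Multiset ℝ) {i : ℕ} (hM : i + 2 ≤ Multiset.card M) :
    esymmMean M i * esymmMean M (i + 2) ≤ esymmMean M (i + 1) ^ 2 := by
  obtain ⟨d, hd⟩ := Nat.exists_eq_add_of_le hM
  induction d generalizing M with
  | zero =>
    have := esymmMean_mul_le_sq_of_card_eq (fun x : M => (x : ℝ)) ((Multiset.card_coe M).trans hd)
    rwa [Multiset.map_univ_coe] at this
  | succ d ih =>
    have h (j : ℕ) (hj : j ≤ i + 2) :=
      esymmMean_roots_derivative_prod_X_sub_C M (j := j) (by omega)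
    rw [← h i (by omega), ← h (i + 1) (by omega), ← h (i + 2) le_rfl]
    exact ih _ (by rw [card_roots_derivative_prod_X_sub_C]; omega)
      (by rw [card_roots_derivative_prod_X_sub_C]; omega)

section LogConcave

variable {p : ℕ → ℝ} {k : ℕ}

theorem pow_succ_le_pow_of_mul_le_sq (h0 : 1 ≤ p 0) (hpos : ∀ j ≤ k, 0 < p j)
    (hp : ∀ j, j + 2 ≤ k → p j * p (j + 2) ≤ p (j + 1) ^ 2) :
    ∀ j, j + 1 ≤ k → p (j + 1) ^ j ≤ p j ^ (j + 1)
  | 0, _ => by simpa using h0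
  | m + 1, hm => by
    have hm0 := hpos m (by omega)
    have hm2 := hpos (m + 2) (by omega)
    refine le_of_mul_le_mul_right ?_ (pow_pos hm0 (m + 1))
    calc p (m + 2) ^ (m + 1) * p m ^ (m + 1) = (p m * p (m + 2)) ^ (m + 1) := by ring
      _ ≤ (p (m + 1) ^ 2) ^ (m + 1) := by gcongr; exact hp m hm
      _ = p (m + 1) ^ (m + 2) * p (m + 1) ^ m := by ring
      _ ≤ p (m + 1) ^ (m + 2) * p m ^ (m + 1) :=
        mul_le_mul_of_nonneg_left (pow_succ_le_pow_of_mul_le_sq h0 hpos hp m (by omega))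
          (pow_nonneg (hpos (m + 1) (by omega)).le _)

theorem rpow_one_div_succ_le_of_pow_le {a b : ℝ} {j : ℕ} (ha : 0 ≤ a) (hb : 0 ≤ b) (hj : j ≠ 0)
    (h : a ^ j ≤ b ^ (j + 1)) : a ^ ((1 : ℝ) / (j + 1 : ℕ)) ≤ b ^ ((1 : ℝ) / j) := by
  have hj' : (j : ℝ) ≠ 0 := Nat.cast_ne_zero.mpr hj
  have := Real.rpow_le_rpow (by positivity) h (by positivity : 0 ≤ (1 : ℝ) / (j * (j + 1)))
  rw [← Real.rpow_natCast, ← Real.rpow_natCast, ← Real.rpow_mul ha, ← Real.rpow_mul hb,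
    mul_one_div, mul_one_div, Nat.cast_add_one, div_mul_cancel_left₀ hj',
    div_mul_cancel_right₀ (by positivity)] at this
  simpa only [one_div, Nat.cast_add_one] using this

theorem antitoneOn_rpow_one_div_of_mul_le_sq (h0 : 1 ≤ p 0) (hpos : ∀ j ≤ k, 0 < p j)
    (hp : ∀ j, j + 2 ≤ k → p j * p (j + 2) ≤ p (j + 1) ^ 2) :
    AntitoneOn (fun j : ℕ => p j ^ ((1 : ℝ) / j)) (Set.Icc 1 k) := by
  refine antitoneOn_of_succ_le Set.ordConnected_Icc fun j _ hj hj' => ?_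
  rw [Order.succ_eq_add_one] at hj' ⊢
  exact rpow_one_div_succ_le_of_pow_le (hpos _ hj'.2).le (hpos _ hj.2).le
    (by have := hj.1; omega) (pow_succ_le_pow_of_mul_le_sq h0 hpos hp j hj'.2)

end LogConcave

/-- The MacLaurin inequality on `Γ_k`. -/
theorem stmt_2 (n k l : ℕ) (hl : 1 ≤ l) (hlk : l ≤ k) (hkn : k ≤ n)
    (lam : Fin n → ℝ) (hlam : lam ∈ Gamma n k) :
    (esymm' n k lam / (n.choose k : ℝ)) ^ ((1 : ℝ) / k)
      ≤ (esymm' n l lam / (n.choose l : ℝ)) ^ ((1 : ℝ) / l) := by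
  set M : Multiset ℝ := univ.val.map lam
  have hcard : Multiset.card M = n := by simp [M]
  have hmean (j : ℕ) : esymmMean M j = esymm' n j lam / n.choose j := by
    rw [esymmMean, hcard, esymm_map_val]; rfl
  have hpos (j : ℕ) (hj : j ≤ k) : 0 < esymmMean M j := by
    rcases Nat.eq_zero_or_pos j with rfl | hj0
    · simp [esymmMean_zero]
    · rw [hmean]
      exact div_pos (hlam j hj0 hj) (Nat.cast_pos.mpr (Nat.choose_pos (hj.trans hkn)))
  simp only [← hmean]
  exact antitoneOn_rpow_one_div_of_mul_le_sq (esymmMean_zero M).ge hpos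
    (fun j hj => esymmMean_mul_le_sq M (by omega)) ⟨hl, hlk⟩ ⟨hl.trans hlk, le_rfl⟩ hlk
end
end

section
/- The set Γ_k = {λ ∈ ℝ^n : S_i(λ) > 0 for 1 ≤ i ≤ k} is a convex cone: it is closed under addition and under multiplication by positive scalars. -/
/-!
Gårding's argument. By Gauss–Lucas applied to `∏ (X + z i)`, `S_k z ≠ 0` whenever every `z i`
lies in the open upper half-plane. The roots of a family of polynomials of fixed degree move
continuously, so a root can only enter a half-plane through its boundary. Deforming the direction
from a positive vector to `μ ∈ Γ_k`, with the base point pushed off the reals by `i α` and then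
`α → 0`, shows that `t ↦ S_k (x + t μ)` has only real roots. For `λ, μ ∈ Γ_k` the roots of
`t ↦ S_k (λ + s + t (μ + s))` are then real and nonzero for all `s ≥ 0` and negative for large `s`,
hence negative at `s = 0`, so `S_k (λ + μ) > 0`.
-/

open scoped BigOperators
noncomputable section

open Finset Polynomial

section ElemSymm

variable {ι R : Type*} [Fintype ι]

def elemSymm [CommSemiring R] (k : ℕ) (x : ι → R) : R :=
  ∑ t ∈ univ.powersetCard k, ∏ i ∈ t, x i

theorem esymm'_eq_elemSymm (n k : ℕ) : esymm' n k = elemSymm k := rfl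

variable [CommSemiring R]

@[simp]
theorem elemSymm_zero (x : ι → R) : elemSymm 0 x = 1 := by
  simp [elemSymm]

theorem elemSymm_eq_zero_of_card_lt {k : ℕ} (hk : Fintype.card ι < k) (x : ι → R) :
    elemSymm k x = 0 := by
  rw [elemSymm, powersetCard_eq_empty.2 (by rwa [card_univ]), sum_empty]

theorem map_elemSymm {S : Type*} [CommSemiring S] (f : R →+* S) (k : ℕ) (x : ι → R) :
    f (elemSymm k x) = elemSymm k (fun i => f (x i)) := by
  simp [elemSymm, map_sum, map_prod]

theorem elemSymm_smul (k : ℕ) (c : R) (x : ι → R) :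
    elemSymm k (c • x) = c ^ k * elemSymm k x := by
  simp only [elemSymm, mul_sum, Pi.smul_apply, smul_eq_mul, prod_mul_distrib, prod_const]
  refine sum_congr rfl fun t ht => ?_
  rw [(mem_powersetCard.1 ht).2]

theorem coeff_prod_X_add_C {k : ℕ} (hk : k ≤ Fintype.card ι) (x : ι → R) :
    (∏ i, (X + C (x i))).coeff (Fintype.card ι - k) = elemSymm k x := by
  rw [prod_X_add_C_coeff _ _ (by simp), card_univ, Nat.sub_sub_self hk]
  rfl

theorem elemSymm_pos [PartialOrder R] [IsStrictOrderedRing R] {k : ℕ}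
    (hk : k ≤ Fintype.card ι) {x : ι → R} (hx : ∀ i, 0 < x i) : 0 < elemSymm k x :=
  sum_pos (fun _ _ => prod_pos fun i _ => hx i) (powersetCard_nonempty.2 (by simpa using hk))

theorem coeff_le_coeff_taylor [PartialOrder R] [IsOrderedRing R] {p : R[X]} {m : ℕ}
    (hp : ∀ j, m ≤ j → 0 ≤ p.coeff j) {s : R} (hs : 0 ≤ s) :
    p.coeff m ≤ (taylor s p).coeff m := by
  rw [taylor_coeff, eval_eq_sum_range]
  refine le_trans (le_of_eq ?_) (single_le_sum (fun i _ => ?_) (mem_range.2 (Nat.succ_pos _)))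
  · simp [hasseDeriv_coeff]
  · rw [hasseDeriv_coeff]
    exact mul_nonneg (mul_nonneg (Nat.cast_nonneg _) (hp _ (by omega))) (pow_nonneg hs i)

theorem elemSymm_le_elemSymm_add_const [PartialOrder R] [IsOrderedRing R] {k : ℕ}
    (hk : k ≤ Fintype.card ι) {x : ι → R} (hx : ∀ j ≤ k, 0 ≤ elemSymm j x) {s : R}
    (hs : 0 ≤ s) : elemSymm k x ≤ elemSymm k (fun i => x i + s) := by
  -- `S_k (x + s)` is a coefficient of the Taylor shift by `s` of `∏ (X + x i)`.
  have hshift : taylor s (∏ i, (X + C (x i))) = ∏ i, (X + C (x i + s)) := by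
    simp only [taylor_apply, Polynomial.prod_comp, add_comp, X_comp, C_comp, C_add, add_assoc,
      add_comm (C s)]
  rw [← coeff_prod_X_add_C hk, ← coeff_prod_X_add_C hk, ← hshift]
  refine coeff_le_coeff_taylor (fun j hj => ?_) hs
  rcases le_or_gt j (Fintype.card ι) with hj' | hj'
  · rw [← Nat.sub_sub_self hj', coeff_prod_X_add_C (Nat.sub_le _ _)]
    exact hx _ (by omega)
  · rw [coeff_eq_zero_of_natDegree_lt]
    refine (natDegree_prod_le _ _).trans_lt (lt_of_le_of_lt ?_ hj')
    simpa [natDegree_add_C] using sum_le_sum fun i (_ : i ∈ univ) => natDegree_X_le (R := R)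

end ElemSymm

section ElemSymmLine

theorem continuous_coeff_prod {Y ι R : Type*} [TopologicalSpace Y] [CommSemiring R]
    [TopologicalSpace R] [IsTopologicalSemiring R] (s : Finset ι) {p : ι → Y → R[X]}
    (hp : ∀ i j, Continuous fun x => (p i x).coeff j) (j : ℕ) :
    Continuous fun x => (∏ i ∈ s, p i x).coeff j := by
  classical
  induction s using Finset.induction_on generalizing j with
  | empty => simpa using continuous_const
  | insert a s ha ih =>
    simp only [prod_insert ha, coeff_mul]
    exact continuous_finsetSum _ fun m _ => (hp a m.1).mul (ih m.2)

variable {ι R : Type*} [Fintype ι] [CommSemiring R]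

def elemSymmLine (k : ℕ) (u v : ι → R) : R[X] :=
  ∑ t ∈ univ.powersetCard k, ∏ i ∈ t, (C (v i) * X + C (u i))

@[simp]
theorem eval_elemSymmLine (k : ℕ) (u v : ι → R) (z : R) :
    (elemSymmLine k u v).eval z = elemSymm k (fun i => u i + z * v i) := by
  simp only [elemSymmLine, elemSymm, eval_finsetSum, eval_prod, eval_add, eval_mul, eval_C,
    eval_X]
  simp_rw [add_comm, mul_comm]

theorem natDegree_elemSymmLine_le (k : ℕ) (u v : ι → R) :
    (elemSymmLine k u v).natDegree ≤ k := by
  refine natDegree_sum_le_of_forall_le _ _ fun t ht => (natDegree_prod_le _ _).trans ?_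
  refine (sum_le_sum fun i _ => natDegree_linear_le (a := v i) (b := u i)).trans ?_
  simp [(mem_powersetCard.1 ht).2]

theorem coeff_elemSymmLine_self (k : ℕ) (u v : ι → R) :
    (elemSymmLine k u v).coeff k = elemSymm k v := by
  simp only [elemSymmLine, finsetSum_coeff, elemSymm]
  refine sum_congr rfl fun t ht => ?_
  have h := coeff_prod_of_natDegree_le t (fun i => C (v i) * X + C (u i)) 1
    fun _ _ => natDegree_linear_le
  rw [mul_one, (mem_powersetCard.1 ht).2] at h
  simp [h]

theorem continuous_coeff_elemSymmLine {Y : Type*} [TopologicalSpace Y] [TopologicalSpace R]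
    [IsTopologicalSemiring R] (k : ℕ) {u v : Y → ι → R} (hu : Continuous u) (hv : Continuous v)
    (j : ℕ) : Continuous fun x => (elemSymmLine k (u x) (v x)).coeff j := by
  simp only [elemSymmLine, finsetSum_coeff]
  refine continuous_finsetSum _ fun t _ => continuous_coeff_prod t (fun i m => ?_) j
  simp only [coeff_add, coeff_C_mul_X, coeff_C]
  split_ifs <;> fun_prop

end ElemSymmLine

section Stability

theorem isRoot_derivative_im_neg {p : ℂ[X]} (hp : 0 < p.degree)
    (h : ∀ z, p.IsRoot z → z.im < 0) {z : ℂ} (hz : p.derivative.IsRoot z) : z.im < 0 := by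
  have hp' : p.derivative ≠ 0 := by
    rw [Ne, derivative_eq_zero, ← Ne, ← pos_iff_ne_zero]
    exact natDegree_pos_iff_degree_pos.2 hp
  have hhull : convexHull ℝ (p.rootSet ℂ) ⊆ {w : ℂ | w.im < 0} :=
    (convex_halfSpace_lt Complex.imLm.isLinear 0).convexHull_subset_iff.2 fun w hw =>
      h w (by simpa using (mem_rootSet.1 hw).2)
  exact hhull (rootSet_derivative_subset_convexHull_rootSet hp
    (mem_rootSet.2 ⟨hp', by simpa using hz⟩))

theorem isRoot_iterate_derivative_im_neg {p : ℂ[X]} (h : ∀ z, p.IsRoot z → z.im < 0) {m : ℕ}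
    (hm : m ≤ p.natDegree) {z : ℂ} (hz : (derivative^[m] p).IsRoot z) : z.im < 0 := by
  induction m generalizing z with
  | zero => exact h z hz
  | succ m ih =>
    rw [Function.iterate_succ_apply'] at hz
    refine isRoot_derivative_im_neg ?_ (fun w hw => ih (by omega) hw) hz
    have hp : p ≠ 0 := fun h0 => by simpa using h 0 (by simp [h0])
    have hcoeff : (derivative^[m] p).coeff (p.natDegree - m) ≠ 0 := by
      rw [coeff_iterate_derivative, Nat.sub_add_cancel (by omega), nsmul_eq_mul]
      exact mul_ne_zero (Nat.cast_ne_zero.2 (Nat.descFactorial_pos.2 (by omega)).ne')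
        (leadingCoeff_ne_zero.2 hp)
    exact natDegree_pos_iff_degree_pos.1 ((by omega : 0 < p.natDegree - m).trans_le
      (le_natDegree_of_ne_zero hcoeff))

theorem elemSymm_ne_zero_of_forall_im_pos {ι : Type*} [Fintype ι] {k : ℕ}
    (hk : k ≤ Fintype.card ι) {z : ι → ℂ} (hz : ∀ i, 0 < (z i).im) : elemSymm k z ≠ 0 := by
  -- `S_k z` is, up to a factorial, the constant term of the `(card ι - k)`-th derivative of `p`,
  -- whose roots stay in the lower half-plane by Gauss–Lucas.
  set p : ℂ[X] := ∏ i, (X + C (z i))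
  have hdeg : p.natDegree = Fintype.card ι := by
    rw [natDegree_prod_of_monic _ _ fun i _ => monic_X_add_C _]
    simp
  have hroots : ∀ w, p.IsRoot w → w.im < 0 := by
    intro w hw
    obtain ⟨i, -, hi⟩ := prod_eq_zero_iff.1 (by simpa [p, eval_prod] using hw)
    rw [eq_neg_of_add_eq_zero_left hi, Complex.neg_im, neg_lt_zero]
    exact hz i
  intro h0
  have h := isRoot_iterate_derivative_im_neg hroots (m := Fintype.card ι - k) (by omega) (z := 0)
  refine (lt_irrefl (0 : ℝ)) (by simpa using h ?_)
  rw [IsRoot, ← coeff_zero_eq_eval_zero, coeff_iterate_derivative, zero_add,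
    coeff_prod_X_add_C hk, h0, smul_zero]

theorem not_isRoot_elemSymmLine_of_im_pos {ι : Type*} [Fintype ι] {k : ℕ} (hk : k ≤ Fintype.card ι)
    {u v : ι → ℂ} {z : ℂ} (h : ∀ i, 0 < (u i + z * v i).im) :
    ¬ (elemSymmLine k u v).IsRoot z := by
  rw [IsRoot, eval_elemSymmLine]
  exact elemSymm_ne_zero_of_forall_im_pos hk h

theorem elemSymm_ofReal {ι : Type*} [Fintype ι] (k : ℕ) (x : ι → ℝ) :
    elemSymm k (fun i => (x i : ℂ)) = ((elemSymm k x : ℝ) : ℂ) :=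
  (map_elemSymm Complex.ofRealHom k x).symm

theorem exists_isRoot_norm_sub_pow_le {p : ℂ[X]} (hp : 0 < p.natDegree) (z : ℂ) :
    ∃ r, p.IsRoot r ∧ ‖z - r‖ ^ p.natDegree ≤ ‖p.eval z‖ / ‖p.leadingCoeff‖ := by
  have hsplit := IsAlgClosed.splits p
  have hp0 : p ≠ 0 := ne_zero_of_natDegree_gt hp
  obtain ⟨r, hr, hmin⟩ := p.roots.toFinset.exists_min_image (fun r => ‖z - r‖)
    (Multiset.toFinset_nonempty.2 (hsplit.roots_ne_zero hp.ne'))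
  rw [Multiset.mem_toFinset] at hr
  refine ⟨r, (mem_roots hp0).1 hr, ?_⟩
  rw [le_div_iff₀ (norm_pos_iff.2 (leadingCoeff_ne_zero.2 hp0)), hsplit.eval_eq_prod_roots,
    norm_mul, mul_comm, ← splits_iff_card_roots.1 hsplit]
  gcongr
  calc ‖z - r‖ ^ Multiset.card p.roots = (p.roots.map fun _ => ‖z - r‖).prod := by simp
    _ ≤ (p.roots.map fun x => ‖z - x‖).prod :=
        Multiset.prod_map_le_prod_map₀ _ _ (fun _ _ => norm_nonneg _)
          fun x hx => hmin x (Multiset.mem_toFinset.2 hx)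
    _ = ‖(p.roots.map fun x => z - x).prod‖ := by
        simpa [Multiset.map_map, Function.comp_def] using
          (map_multiset_prod (normHom : ℂ →*₀ ℝ) (p.roots.map fun x => z - x)).symm

theorem norm_le_of_isRoot {p : ℂ[X]} (hp : p ≠ 0) {z : ℂ} (hz : p.IsRoot z) :
    ‖z‖ ≤ (∑ j ∈ range p.natDegree, ‖p.coeff j‖) / ‖p.leadingCoeff‖ + 1 := by
  have h := NNReal.coe_le_coe.2 (hz.norm_lt_cauchyBound hp).le
  refine h.trans ?_
  simp only [cauchyBound, NNReal.coe_add, NNReal.coe_div, NNReal.coe_one, coe_nnnorm]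
  gcongr
  have hsup : (range p.natDegree).sup (fun j => ‖p.coeff j‖₊) ≤
      ∑ j ∈ range p.natDegree, ‖p.coeff j‖₊ :=
    Finset.sup_le fun j hj => single_le_sum (f := fun j => ‖p.coeff j‖₊) (fun _ _ => zero_le) hj
  simpa using NNReal.coe_le_coe.2 hsup

end Stability

section RootContinuity

open Filter Topology

variable {Y : Type*} [TopologicalSpace Y] {P : Y → ℂ[X]} {k : ℕ}

theorem continuous_eval_of_continuous_coeff (hP : ∀ j, Continuous fun x => (P x).coeff j)
    (hdeg : ∀ x, (P x).natDegree ≤ k) : Continuous fun q : Y × ℂ => (P q.1).eval q.2 := by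
  simp_rw [fun q : Y × ℂ => eval_eq_sum_range' (Nat.lt_succ_of_le (hdeg q.1)) q.2]
  exact continuous_finsetSum _ fun j _ => ((hP j).comp continuous_fst).mul (continuous_snd.pow j)

theorem isOpen_setOf_exists_isRoot_mem (hP : ∀ j, Continuous fun x => (P x).coeff j)
    (hdeg : ∀ x, (P x).natDegree ≤ k) {U : Set ℂ} (hU : IsOpen U) :
    IsOpen {x | (P x).coeff k ≠ 0 ∧ ∃ z ∈ U, (P x).IsRoot z} := by
  rw [isOpen_iff_mem_nhds]
  rintro x₀ ⟨hc, z, hzU, hz⟩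
  obtain ⟨ε, hε, hball⟩ := Metric.isOpen_iff.1 hU z hzU
  have hnat : ∀ x, (P x).coeff k ≠ 0 → (P x).natDegree = k := fun x hx =>
    natDegree_eq_of_le_of_coeff_ne_zero (hdeg x) hx
  have hk : 0 < k := by
    rw [← hnat x₀ hc]
    exact natDegree_pos_iff_degree_pos.2 (degree_pos_of_root (fun h0 => by simp [h0] at hc) hz)
  have hlim : Tendsto (fun x => ‖(P x).eval z‖ / ‖(P x).coeff k‖) (𝓝 x₀) (𝓝 0) := by
    have hev : Continuous fun x => (P x).eval z :=
      (continuous_eval_of_continuous_coeff hP hdeg).comp (continuous_id.prodMk continuous_const)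
    simpa [hz.eq_zero, Pi.div_def] using
      (hev.norm.continuousAt.div (hP k).norm.continuousAt (norm_ne_zero_iff.2 hc)).tendsto
  filter_upwards [(hP k).continuousAt.eventually_ne hc,
    hlim.eventually (gt_mem_nhds (pow_pos hε k))] with x hcx hx
  obtain ⟨r, hr, hle⟩ := exists_isRoot_norm_sub_pow_le (by rwa [hnat x hcx]) z
  rw [leadingCoeff, hnat x hcx] at hle
  refine ⟨hcx, r, hball ?_, hr⟩
  rw [Metric.mem_ball, dist_comm, dist_eq_norm]
  exact (pow_lt_pow_iff_left₀ (norm_nonneg _) hε.le hk.ne').1 (hle.trans_lt hx)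

theorem isOpen_setOf_forall_not_isRoot (hP : ∀ j, Continuous fun x => (P x).coeff j)
    (hdeg : ∀ x, (P x).natDegree ≤ k) {F : Set ℂ} (hF : IsClosed F) :
    IsOpen {x | (P x).coeff k ≠ 0 ∧ ∀ z ∈ F, ¬ (P x).IsRoot z} := by
  rw [isOpen_iff_mem_nhds]
  rintro x₀ ⟨hc, hF₀⟩
  set B : Y → ℝ := fun x => (∑ j ∈ range k, ‖(P x).coeff j‖) / ‖(P x).coeff k‖ + 1
  have hB : ContinuousAt B x₀ :=
    ((continuous_finsetSum _ fun j _ => (hP j).norm).continuousAt.div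
      (hP k).norm.continuousAt (norm_ne_zero_iff.2 hc)).add continuousAt_const
  have hK : IsCompact (F ∩ Metric.closedBall 0 (B x₀ + 1)) :=
    (isCompact_closedBall _ _).inter_left hF
  have hnear : ∀ᶠ x in 𝓝 x₀, ∀ z ∈ F ∩ Metric.closedBall 0 (B x₀ + 1), (P x).eval z ≠ 0 :=
    hK.eventually_forall_of_forall_eventually fun z hz =>
      (continuous_eval_of_continuous_coeff hP hdeg).continuousAt.eventually_ne (hF₀ z hz.1)
  filter_upwards [(hP k).continuousAt.eventually_ne hc,
    hB.eventually (gt_mem_nhds (lt_add_one (B x₀))), hnear] with x hcx hBx hx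
  refine ⟨hcx, fun z hzF hz => hx z ⟨hzF, ?_⟩ hz⟩
  have hnat := natDegree_eq_of_le_of_coeff_ne_zero (hdeg x) hcx
  have hbound := norm_le_of_isRoot (fun h0 => by simp [h0] at hcx) hz
  rw [leadingCoeff, hnat] at hbound
  rw [mem_closedBall_zero_iff]
  exact hbound.trans hBx.le

theorem forall_not_isRoot_of_isPreconnected (hP : ∀ j, Continuous fun x => (P x).coeff j)
    (hdeg : ∀ x, (P x).natDegree ≤ k) {I : Set Y} (hI : IsPreconnected I)
    (hlead : ∀ x ∈ I, (P x).coeff k ≠ 0) {U F : Set ℂ} (hU : IsOpen U) (hF : IsClosed F)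
    (hUF : U ⊆ F) (hFU : ∀ x ∈ I, ∀ z ∈ F, (P x).IsRoot z → z ∈ U) {x₀ : Y} (hx₀ : x₀ ∈ I)
    (h₀ : ∀ z ∈ F, ¬ (P x₀).IsRoot z) {x : Y} (hx : x ∈ I) : ∀ z ∈ F, ¬ (P x).IsRoot z := by
  refine (hI.subset_left_of_subset_union (isOpen_setOf_forall_not_isRoot hP hdeg hF)
    (isOpen_setOf_exists_isRoot_mem hP hdeg hU) ?_ ?_ ⟨x₀, hx₀, hlead x₀ hx₀, h₀⟩ hx).2
  · exact Set.disjoint_left.2 fun x h h' => h.2 _ (hUF h'.2.choose_spec.1) h'.2.choose_spec.2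
  · intro x hx
    by_cases h : ∃ z ∈ F, (P x).IsRoot z
    · obtain ⟨z, hzF, hz⟩ := h
      exact Or.inr ⟨hlead x hx, z, hFU x hx z hzF hz, hz⟩
    · exact Or.inl ⟨hlead x hx, fun z hzF hz => h ⟨z, hzF, hz⟩⟩

end RootContinuity

section GardingCone

variable {n k : ℕ}

theorem exists_nonneg_add_pos {ι : Type*} [Finite ι] (x : ι → ℝ) :
    ∃ T, 0 ≤ T ∧ ∀ i, 0 < x i + T := by
  obtain ⟨m, hm⟩ := (Set.finite_range x).bddBelow
  refine ⟨|m| + 1, by positivity, fun i => ?_⟩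
  have := hm (Set.mem_range_self i)
  linarith [neg_abs_le m]

theorem Gamma_anti {j : ℕ} (hjk : j ≤ k) : Gamma n k ⊆ Gamma n j :=
  fun _ h i hi hij => h i hi (hij.trans hjk)

theorem elemSymm_pos_of_mem_Gamma {lam : Fin n → ℝ} (h : lam ∈ Gamma n k) :
    0 < elemSymm k lam := by
  rcases Nat.eq_zero_or_pos k with rfl | hk
  · simp
  · exact h k hk le_rfl

theorem le_of_mem_Gamma {lam : Fin n → ℝ} (h : lam ∈ Gamma n k) : k ≤ n := by
  by_contra hlt
  have h' := elemSymm_pos_of_mem_Gamma h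
  rw [elemSymm_eq_zero_of_card_lt (by simpa using hlt)] at h'
  exact lt_irrefl _ h'

theorem add_const_mem_Gamma {lam : Fin n → ℝ} (h : lam ∈ Gamma n k) {s : ℝ} (hs : 0 ≤ s) :
    (fun i => lam i + s) ∈ Gamma n k := by
  intro j hj hjk
  have hjn := le_of_mem_Gamma (Gamma_anti hjk h)
  refine (h j hj hjk).trans_le (elemSymm_le_elemSymm_add_const (by simpa using hjn)
    (fun i hi => (elemSymm_pos_of_mem_Gamma (Gamma_anti (hi.trans hjk) h)).le) hs)

theorem coeff_elemSymmLine_self_ne_zero {mu : Fin n → ℝ} (hmu : mu ∈ Gamma n k)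
    (u : Fin n → ℂ) :
    (elemSymmLine k u (fun i => (mu i : ℂ))).coeff k ≠ 0 := by
  rw [coeff_elemSymmLine_self, elemSymm_ofReal, Complex.ofReal_ne_zero]
  exact (elemSymm_pos_of_mem_Gamma hmu).ne'

theorem im_neg_of_isRoot_elemSymmLine_add_mul_I (hkn : k ≤ n) {mu : Fin n → ℝ}
    (hmu : mu ∈ Gamma n k) (x : Fin n → ℝ) {α : ℝ} (hα : 0 < α) {z : ℂ}
    (hz : (elemSymmLine k (fun i => x i + α * Complex.I) (fun i => (mu i : ℂ))).IsRoot z) :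
    z.im < 0 := by
  -- Deform the direction from the positive vector `mu + T` down to `mu` inside `Γ_k`; the
  -- imaginary shift `α` keeps every root off the real axis.
  set P : ℝ → ℂ[X] := fun τ =>
    elemSymmLine k (fun i => x i + α * Complex.I) (fun i => ((mu i + τ : ℝ) : ℂ))
  have hcard : k ≤ Fintype.card (Fin n) := by simpa using hkn
  have him : ∀ (τ : ℝ) (w : ℂ) (i : Fin n),
      ((x i : ℂ) + α * Complex.I + w * ((mu i + τ : ℝ) : ℂ)).im = α + w.im * (mu i + τ) := by
    simp
  have hnot_real : ∀ τ ∈ Set.Ici (0 : ℝ), ∀ w ∈ {w : ℂ | 0 ≤ w.im}, (P τ).IsRoot w →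
      w ∈ {w : ℂ | 0 < w.im} := by
    intro τ _ w (hw : 0 ≤ w.im) hroot
    refine lt_of_le_of_ne hw fun h0 => not_isRoot_elemSymmLine_of_im_pos hcard (fun i => ?_) hroot
    rw [him, ← h0, zero_mul, add_zero]
    exact hα
  obtain ⟨T, hT, hmuT⟩ := exists_nonneg_add_pos mu
  have hstart : ∀ w ∈ {w : ℂ | 0 ≤ w.im}, ¬ (P T).IsRoot w := by
    intro w (hw : 0 ≤ w.im)
    refine not_isRoot_elemSymmLine_of_im_pos hcard fun i => ?_
    rw [him]
    exact add_pos_of_pos_of_nonneg hα (mul_nonneg hw (hmuT i).le)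
  have hend := forall_not_isRoot_of_isPreconnected (P := P)
    (continuous_coeff_elemSymmLine k continuous_const (continuous_pi fun i => by fun_prop))
    (fun τ => natDegree_elemSymmLine_le _ _ _) isPreconnected_Ici
    (fun τ hτ => coeff_elemSymmLine_self_ne_zero (add_const_mem_Gamma hmu hτ) _)
    (isOpen_lt continuous_const Complex.continuous_im)
    (isClosed_le continuous_const Complex.continuous_im) (fun w (hw : 0 < w.im) => hw.le)
    hnot_real (Set.mem_Ici.2 hT) hstart (Set.mem_Ici.2 le_rfl)
  by_contra hneg
  exact hend z (not_lt.1 hneg) (by simpa [P] using hz)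

theorem im_nonpos_of_isRoot_elemSymmLine (hkn : k ≤ n) {mu : Fin n → ℝ} (hmu : mu ∈ Gamma n k)
    (x : Fin n → ℝ) {z : ℂ}
    (hz : (elemSymmLine k (fun i => (x i : ℂ)) (fun i => (mu i : ℂ))).IsRoot z) : z.im ≤ 0 := by
  by_contra hpos
  have hopen := isOpen_setOf_exists_isRoot_mem (Y := ℝ) (k := k)
    (P := fun α => elemSymmLine k (fun i => x i + α * Complex.I) (fun i => (mu i : ℂ)))
    (continuous_coeff_elemSymmLine k (continuous_pi fun i => by fun_prop) continuous_const)
    (fun _ => natDegree_elemSymmLine_le _ _ _) (U := {w | 0 < w.im})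
    (isOpen_lt continuous_const Complex.continuous_im)
  obtain ⟨ε, hε, hball⟩ := Metric.isOpen_iff.1 hopen 0
    ⟨coeff_elemSymmLine_self_ne_zero hmu _, z, not_le.1 hpos, by simpa using hz⟩
  obtain ⟨-, w, hw, hroot⟩ := hball (a := ε / 2) (by simp [abs_of_pos hε, hε])
  exact lt_asymm hw (im_neg_of_isRoot_elemSymmLine_add_mul_I hkn hmu x (half_pos hε) hroot)

theorem im_eq_zero_of_isRoot_elemSymmLine (hkn : k ≤ n) {mu : Fin n → ℝ} (hmu : mu ∈ Gamma n k)
    (x : Fin n → ℝ) {z : ℂ}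
    (hz : (elemSymmLine k (fun i => (x i : ℂ)) (fun i => (mu i : ℂ))).IsRoot z) : z.im = 0 := by
  refine le_antisymm (im_nonpos_of_isRoot_elemSymmLine hkn hmu x hz) ?_
  have hconj :
      (elemSymmLine k (fun i => (x i : ℂ)) (fun i => (mu i : ℂ))).IsRoot (starRingEnd ℂ z) := by
    rw [IsRoot, eval_elemSymmLine] at hz ⊢
    simpa [map_elemSymm] using congrArg (starRingEnd ℂ) hz
  simpa using im_nonpos_of_isRoot_elemSymmLine hkn hmu x hconj

theorem elemSymm_add_mul_ne_zero {lam mu : Fin n → ℝ} (hlam : lam ∈ Gamma n k)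
    (hmu : mu ∈ Gamma n k) {t : ℝ} (ht : 0 ≤ t) : elemSymm k (fun i => lam i + t * mu i) ≠ 0 := by
  have hkn := le_of_mem_Gamma hlam
  have hcard : k ≤ Fintype.card (Fin n) := by simpa using hkn
  set P : ℝ → ℂ[X] := fun s =>
    elemSymmLine k (fun i => ((lam i + s : ℝ) : ℂ)) (fun i => ((mu i + s : ℝ) : ℂ))
  have heval : ∀ s t : ℝ,
      (P s).eval (t : ℂ) = ((elemSymm k (fun i => lam i + s + t * (mu i + s)) : ℝ) : ℂ) := by
    intro s t
    simp [P, ← elemSymm_ofReal]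
  -- Along `s ↦ (lam + s, mu + s)` the roots of `t ↦ S_k (lam + s + t (mu + s))` are real and
  -- nonzero, and they are negative once both vectors are positive.
  have hreal : ∀ s, 0 ≤ s → ∀ z, (P s).IsRoot z → z = (z.re : ℂ) := fun s hs z hz =>
    Complex.ext rfl
      (by simpa using im_eq_zero_of_isRoot_elemSymmLine hkn (add_const_mem_Gamma hmu hs) _ hz)
  have hnonzero : ∀ s ∈ Set.Ici (0 : ℝ), ∀ z ∈ {z : ℂ | 0 ≤ z.re}, (P s).IsRoot z →
      z ∈ {z : ℂ | 0 < z.re} := by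
    intro s hs z (hz : 0 ≤ z.re) hroot
    refine lt_of_le_of_ne hz fun h0 => ?_
    rw [IsRoot, hreal s hs z hroot, ← h0, heval] at hroot
    simp only [zero_mul, add_zero, Complex.ofReal_eq_zero] at hroot
    exact (elemSymm_pos_of_mem_Gamma (add_const_mem_Gamma hlam hs)).ne' hroot
  obtain ⟨s₀, hs₀, hpos⟩ := exists_nonneg_add_pos (lam ⊓ mu)
  have hstart : ∀ z ∈ {z : ℂ | 0 ≤ z.re}, ¬ (P s₀).IsRoot z := by
    intro z (hz : 0 ≤ z.re) hroot
    rw [IsRoot, hreal s₀ hs₀ z hroot, heval, Complex.ofReal_eq_zero] at hroot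
    refine (elemSymm_pos hcard fun i => ?_).ne' hroot
    have hlam_i : 0 < lam i + s₀ := (hpos i).trans_le (by simp)
    have hmu_i : 0 < mu i + s₀ := (hpos i).trans_le (by simp)
    exact add_pos_of_pos_of_nonneg hlam_i (mul_nonneg hz hmu_i.le)
  have hend := forall_not_isRoot_of_isPreconnected (P := P)
    (continuous_coeff_elemSymmLine k (continuous_pi fun i => by fun_prop)
      (continuous_pi fun i => by fun_prop))
    (fun _ => natDegree_elemSymmLine_le _ _ _) isPreconnected_Ici
    (fun s hs => coeff_elemSymmLine_self_ne_zero (add_const_mem_Gamma hmu hs) _)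
    (isOpen_lt continuous_const Complex.continuous_re)
    (isClosed_le continuous_const Complex.continuous_re) (fun z (hz : 0 < z.re) => hz.le)
    hnonzero (Set.mem_Ici.2 hs₀) hstart (Set.mem_Ici.2 le_rfl)
  intro h0
  refine hend (t : ℂ) (by simpa using ht) ?_
  rw [IsRoot, heval]
  simpa using h0

theorem elemSymm_add_pos {lam mu : Fin n → ℝ} (hlam : lam ∈ Gamma n k)
    (hmu : mu ∈ Gamma n k) : 0 < elemSymm k (lam + mu) := by
  have hcont : Continuous fun t : ℝ => elemSymm k (fun i => lam i + t * mu i) := by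
    unfold elemSymm
    fun_prop
  rw [show lam + mu = fun i => lam i + 1 * mu i by ext; simp]
  by_contra hle
  obtain ⟨t, ht, ht0⟩ := intermediate_value_Icc' zero_le_one hcont.continuousOn
    ⟨not_lt.1 hle, by simpa using (elemSymm_pos_of_mem_Gamma hlam).le⟩
  exact elemSymm_add_mul_ne_zero hlam hmu ht.1 ht0

theorem add_mem_Gamma {lam mu : Fin n → ℝ} (hlam : lam ∈ Gamma n k) (hmu : mu ∈ Gamma n k) :
    lam + mu ∈ Gamma n k :=
  fun _ _ hik => elemSymm_add_pos (Gamma_anti hik hlam) (Gamma_anti hik hmu)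

theorem smul_mem_Gamma {lam : Fin n → ℝ} (h : lam ∈ Gamma n k) {c : ℝ} (hc : 0 < c) :
    c • lam ∈ Gamma n k := fun i hi hik => by
  rw [esymm'_eq_elemSymm, elemSymm_smul]
  exact mul_pos (pow_pos hc i) (h i hi hik)

end GardingCone

theorem stmt_4_general (n k : ℕ) :
    (∀ lam mu : Fin n → ℝ, lam ∈ Gamma n k → mu ∈ Gamma n k → lam + mu ∈ Gamma n k) ∧
    (∀ (lam : Fin n → ℝ) (c : ℝ), 0 < c → lam ∈ Gamma n k → c • lam ∈ Gamma n k) :=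
  ⟨fun _ _ => add_mem_Gamma, fun _ _ hc h => smul_mem_Gamma h hc⟩

/-- `Γ_k` is a convex cone: closed under addition and positive scalar multiplication. -/
theorem stmt_4 (n k : ℕ) (hk : 1 ≤ k) (hkn : k ≤ n) :
    (∀ lam mu : Fin n → ℝ, lam ∈ Gamma n k → mu ∈ Gamma n k → lam + mu ∈ Gamma n k) ∧
    (∀ (lam : Fin n → ℝ) (c : ℝ), 0 < c → lam ∈ Gamma n k → c • lam ∈ Gamma n k) :=
  stmt_4_general n k
end
end

section
/- Subsolution lower bound via superadditivity: if 1 ≤ k < n and w(z) = -|z|^{2-2n/k} + R^{2-2n/k} - 1 + a|z|²/R² with a > 0, then at every z ≠ 0 the eigenvalue vector of the complex Hessian of w lies in Γ_k and H_k[w]^{1/k} ≥ C(n,k)^{1/k}·a·R^{-2}. -/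
open scoped BigOperators
noncomputable section

/-- The Wirtinger derivative `∂u/∂z_i`. -/
def wdz {n : ℕ} (u : (Fin n → ℂ) → ℂ) (i : Fin n) (z : Fin n → ℂ) : ℂ :=
  (1/2 : ℂ) * (fderiv ℝ u z (Pi.single i 1) - Complex.I * fderiv ℝ u z (Pi.single i Complex.I))

/-- The Wirtinger derivative `∂u/∂z̄_i`. -/
def wdzbar {n : ℕ} (u : (Fin n → ℂ) → ℂ) (i : Fin n) (z : Fin n → ℂ) : ℂ :=
  (1/2 : ℂ) * (fderiv ℝ u z (Pi.single i 1) + Complex.I * fderiv ℝ u z (Pi.single i Complex.I))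

/-- The complex Hessian matrix `(∂²u/∂z_i∂z̄_j)`. -/
def cHess {n : ℕ} (u : (Fin n → ℂ) → ℂ) (z : Fin n → ℂ) : Matrix (Fin n) (Fin n) ℂ :=
  Matrix.of fun i j => wdz (fun w => wdzbar u j w) i z

/-!
The function `w = g(|z|²)` is radial, so its complex Hessian at `z` is `g'(t) I + g''(t) z̄ zᵀ`
with `t = |z|²`: the eigenvalues are `β = g'(t)`, with multiplicity `n - 1`, and
`λ = g'(t) + t g''(t)`. With `b = a/R²`, `q = n/k - 1` and `s = q t^{-n/k}` they are
`β = b + s` and `λ = b - q s`, so no superadditivity is needed: directly,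
`S_m = C(n-1,m) β^m + C(n-1,m-1) λ β^{m-1}`, and `m C(n-1,m) = (n-m) C(n-1,m-1)` gives
`m S_m = C(n-1,m-1) β^{m-1} (n b + s (n - m - m q))`. The last factor `n - m - m q` is
nonnegative exactly when `m ≤ k` (it vanishes for `m = k`, which is `S_k = 0` for the Hessian of
`-|z|^{2-2n/k}`), hence `S_m ≥ C(n,m) b^m > 0` for `1 ≤ m ≤ k`.
-/

open Filter Topology Matrix ComplexConjugate Polynomial
open scoped ComplexOrder

-- The Euclidean `|z|²`: the norm Mathlib puts on `ι → ℂ` is the sup norm.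
def sqNorm {ι : Type*} [Fintype ι] (z : ι → ℂ) : ℝ := ∑ i, Complex.normSq (z i)

section RankOne

variable {ι : Type*} [Fintype ι] [DecidableEq ι]

lemma isHermitian_smul_vecMulVec_add_smul_one (c β : ℝ) (x : ι → ℂ) :
    ((c : ℂ) • vecMulVec (star x) x + (β : ℂ) • 1).IsHermitian :=
  ((posSemidef_vecMulVec_star_self x).isHermitian.smul (Complex.conj_ofReal c)).add
    (isHermitian_one.smul (Complex.conj_ofReal β))

lemma charpoly_smul_vecMulVec_add_smul_one [Nonempty ι] (c β : ℝ) (x : ι → ℂ) :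
    ((c : ℂ) • vecMulVec (star x) x + (β : ℂ) • 1).charpoly
      = (X - C ((β + c * sqNorm x : ℝ) : ℂ)) * (X - C (β : ℂ)) ^ (Fintype.card ι - 1) := by
  have hM : (c : ℂ) • vecMulVec (star x) x + (β : ℂ) • 1
      = vecMulVec ((c : ℂ) • star x) x - scalar ι (-(β : ℂ)) := by
    rw [smul_vecMulVec, map_neg, sub_neg_eq_add, smul_one_eq_diagonal, scalar_apply]
  have hdot : ((c : ℂ) • star x) ⬝ᵥ x = ((c * sqNorm x : ℝ) : ℂ) := by
    simp [sqNorm, dotProduct, Finset.mul_sum, mul_assoc, ← Complex.normSq_eq_conj_mul_self]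
  obtain ⟨m, hm⟩ : ∃ m, Fintype.card ι = m + 1 :=
    ⟨_, (Nat.succ_pred_eq_of_pos Fintype.card_pos).symm⟩
  rw [hM, charpoly_sub_scalar, charpoly_vecMulVec, hdot, hm]
  simp only [Nat.add_sub_cancel, sub_comp, smul_comp, X_pow_comp, C_neg, ← sub_eq_add_neg]
  rw [pow_succ, smul_eq_C_mul, Complex.ofReal_add, C_add]
  ring

lemma eigenvalues_smul_vecMulVec_add_smul_one [Nonempty ι] (c β : ℝ) (x : ι → ℂ)
    (hM : ((c : ℂ) • vecMulVec (star x) x + (β : ℂ) • 1).IsHermitian) :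
    Finset.univ.val.map hM.eigenvalues
      = (β + c * sqNorm x) ::ₘ Multiset.replicate (Fintype.card ι - 1) β := by
  apply Multiset.map_injective Complex.ofReal_injective
  have h := hM.roots_charpoly_eq_eigenvalues
  rw [charpoly_smul_vecMulVec_add_smul_one,
    roots_mul (mul_ne_zero (X_sub_C_ne_zero _) (pow_ne_zero _ (X_sub_C_ne_zero _))), roots_pow,
    roots_X_sub_C, roots_X_sub_C] at h
  simpa [Multiset.map_map, Multiset.nsmul_singleton, Multiset.map_replicate] using h.symm

end RankOne

lemma hasDerivAt_neg_rpow_add_linear (p C b : ℝ) {s : ℝ} (hs : s ≠ 0) :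
    HasDerivAt (fun s => -(s ^ p) + C + b * s) (b - p * s ^ (p - 1)) s := by
  have h := ((Real.hasDerivAt_rpow_const (p := p) (Or.inl hs)).neg.add_const C).add
    ((hasDerivAt_id' s).const_mul b)
  exact h.congr_deriv (by ring)

section Radial

variable {n : ℕ}

lemma continuous_sqNorm : Continuous (sqNorm : (Fin n → ℂ) → ℝ) := by
  unfold sqNorm; fun_prop

lemma sqNorm_pos {z : Fin n → ℂ} (hz : z ≠ 0) : 0 < sqNorm z := by
  obtain ⟨i, hi⟩ := Function.ne_iff.mp hz
  exact Finset.sum_pos' (fun j _ => Complex.normSq_nonneg (z j))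
    ⟨i, Finset.mem_univ i, Complex.normSq_pos.mpr hi⟩

lemma hasFDerivAt_sqNorm (z : Fin n → ℂ) :
    HasFDerivAt sqNorm (∑ i, 2 • (innerSL ℝ (z i)).comp (ContinuousLinearMap.proj i)) z := by
  have : sqNorm = fun y : Fin n → ℂ => ∑ i, ‖y i‖ ^ 2 :=
    funext fun y => by simp only [sqNorm, Complex.normSq_eq_norm_sq]
  rw [this]
  exact HasFDerivAt.fun_sum fun i _ => (hasFDerivAt_apply i z).norm_sq

lemma fderiv_sqNorm_single (z : Fin n → ℂ) (j : Fin n) (c : ℂ) :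
    fderiv ℝ sqNorm z (Pi.single j c) = 2 * (c * conj (z j)).re := by
  simp [(hasFDerivAt_sqNorm z).fderiv, Pi.single_apply, Complex.inner, apply_ite, mul_add]

lemma Filter.EventuallyEq.wdz_eq {u v : (Fin n → ℂ) → ℂ} {z : Fin n → ℂ}
    (h : u =ᶠ[𝓝 z] v) (i : Fin n) : wdz u i z = wdz v i z := by
  rw [wdz, wdz, h.fderiv_eq]

lemma wdzbar_ofReal_comp_sqNorm {g : ℝ → ℝ} {d : ℝ} {z : Fin n → ℂ}
    (hg : HasDerivAt g d (sqNorm z)) (j : Fin n) :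
    wdzbar (fun y => (g (sqNorm y) : ℂ)) j z = d * z j := by
  have hu : HasFDerivAt (fun y => (g (sqNorm y) : ℂ)) _ z := Complex.ofRealCLM.hasFDerivAt.comp z
    (hg.comp_hasFDerivAt z (hasFDerivAt_sqNorm z).differentiableAt.hasFDerivAt)
  rw [wdzbar, hu.fderiv]
  simp [fderiv_sqNorm_single, Complex.ext_iff]
  constructor <;> ring

lemma wdz_ofReal_comp_sqNorm_mul_apply {h : ℝ → ℝ} {d : ℝ} {z : Fin n → ℂ}
    (hh : HasDerivAt h d (sqNorm z)) (i j : Fin n) :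
    wdz (fun y => (h (sqNorm y) : ℂ) * y j) i z
      = d * conj (z i) * z j + h (sqNorm z) * (if i = j then 1 else 0) := by
  have hu : HasFDerivAt (fun y => (h (sqNorm y) : ℂ) * y j) _ z :=
    (Complex.ofRealCLM.hasFDerivAt.comp z
      (hh.comp_hasFDerivAt z (hasFDerivAt_sqNorm z).differentiableAt.hasFDerivAt)).fun_mul
      (hasFDerivAt_apply j z)
  rw [wdz, hu.fderiv]
  by_cases hij : i = j
  · subst hij
    simp [fderiv_sqNorm_single, Complex.ext_iff]
    constructor <;> ring
  · simp [fderiv_sqNorm_single, Complex.ext_iff, hij, Ne.symm hij]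
    constructor <;> ring

theorem cHess_ofReal_comp_sqNorm {g g' : ℝ → ℝ} {g'' : ℝ} {z : Fin n → ℂ}
    (hg : ∀ᶠ s in 𝓝 (sqNorm z), HasDerivAt g (g' s) s) (hg' : HasDerivAt g' g'' (sqNorm z)) :
    cHess (fun y => (g (sqNorm y) : ℂ)) z
      = (g'' : ℂ) • vecMulVec (star z) z + (g' (sqNorm z) : ℂ) • 1 := by
  have hbar (j : Fin n) : (fun y => wdzbar (fun y => (g (sqNorm y) : ℂ)) j y)
      =ᶠ[𝓝 z] fun y => (g' (sqNorm y) : ℂ) * y j :=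
    (continuous_sqNorm.tendsto z).eventually hg |>.mono fun y hy => wdzbar_ofReal_comp_sqNorm hy j
  ext i j
  rw [cHess, of_apply, (hbar j).wdz_eq, wdz_ofReal_comp_sqNorm_mul_apply hg']
  simp [vecMulVec_apply, one_apply, mul_assoc]

theorem cHess_neg_rpow_add_linear (p C b : ℝ) {z : Fin n → ℂ} (hz : z ≠ 0) :
    cHess (fun y => ((-(sqNorm y ^ p) + C + b * sqNorm y : ℝ) : ℂ)) z
      = ((-(p * (p - 1)) * sqNorm z ^ (p - 1) / sqNorm z : ℝ) : ℂ) • vecMulVec (star z) z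
        + ((b - p * sqNorm z ^ (p - 1) : ℝ) : ℂ) • 1 := by
  have ht := sqNorm_pos hz
  have hg' : HasDerivAt (fun s => b - p * s ^ (p - 1))
      (-(p * (p - 1)) * sqNorm z ^ (p - 1) / sqNorm z) (sqNorm z) := by
    have h := ((Real.hasDerivAt_rpow_const (p := p - 1) (Or.inl ht.ne')).const_mul p).const_sub b
    exact h.congr_deriv (by rw [Real.rpow_sub_one ht.ne' (p - 1)]; ring)
  exact cHess_ofReal_comp_sqNorm (g := fun s => -(s ^ p) + C + b * s)
    (g' := fun s => b - p * s ^ (p - 1)) ((eventually_ne_nhds ht.ne').mono fun s hs =>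
    hasDerivAt_neg_rpow_add_linear p C b hs) hg'

lemma isHermitian_cHess_neg_rpow_add_linear (p C b : ℝ) {z : Fin n → ℂ} (hz : z ≠ 0) :
    (cHess (fun y => ((-(sqNorm y ^ p) + C + b * sqNorm y : ℝ) : ℂ)) z).IsHermitian :=
  cHess_neg_rpow_add_linear p C b hz ▸ isHermitian_smul_vecMulVec_add_smul_one _ _ z

theorem eigenvalues_cHess_neg_rpow_add_linear (p C b : ℝ) {z : Fin n → ℂ} (hz : z ≠ 0)
    (hH : (cHess (fun y => ((-(sqNorm y ^ p) + C + b * sqNorm y : ℝ) : ℂ)) z).IsHermitian) :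
    Finset.univ.val.map hH.eigenvalues = (b - p ^ 2 * sqNorm z ^ (p - 1))
      ::ₘ Multiset.replicate (n - 1) (b - p * sqNorm z ^ (p - 1)) := by
  have ht := sqNorm_pos hz
  have : Nonempty (Fin n) := ⟨(Function.ne_iff.mp hz).choose⟩
  revert hH
  rw [cHess_neg_rpow_add_linear p C b hz]
  intro hH
  rw [eigenvalues_smul_vecMulVec_add_smul_one _ _ z hH, Fintype.card_fin]
  congr 1
  field_simp
  ring

end Radial

lemma esymm'_eq_esymm {n : ℕ} (m : ℕ) (lam : Fin n → ℝ) :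
    esymm' n m lam = (Finset.univ.val.map lam).esymm m :=
  (Finset.esymm_map_val lam Finset.univ m).symm

namespace Multiset

variable {R : Type*} [CommSemiring R]

lemma esymm_cons_succ (a : R) (s : Multiset R) (m : ℕ) :
    (a ::ₘ s).esymm (m + 1) = s.esymm (m + 1) + a * s.esymm m := by
  simp [esymm, map_map, sum_map_mul_left]

lemma esymm_replicate (N m : ℕ) (β : R) : (replicate N β).esymm m = N.choose m * β ^ m := by
  have h : (powersetCard m (replicate N β)).map prod = replicate (N.choose m) (β ^ m) := by
    refine eq_replicate.mpr ⟨by simp, fun x hx => ?_⟩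
    obtain ⟨t, ht, rfl⟩ := mem_map.mp hx
    obtain ⟨hle, hcard⟩ := mem_powersetCard.mp ht
    rw [eq_replicate.mpr ⟨hcard, fun y hy => eq_of_mem_replicate (mem_of_le hle hy)⟩,
      prod_replicate]
  rw [esymm, h, sum_replicate, nsmul_eq_mul]

end Multiset

lemma choose_mul_pow_le_esymm_cons_replicate {N m : ℕ} (hm : m ≤ N) {b s q : ℝ}
    (hb : 0 ≤ b) (hs : 0 ≤ s) (hq : (m + 1) * q ≤ N - m) :
    ((N + 1).choose (m + 1) : ℝ) * b ^ (m + 1)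
      ≤ ((b - q * s) ::ₘ Multiset.replicate N (b + s)).esymm (m + 1) := by
  rw [Multiset.esymm_cons_succ, Multiset.esymm_replicate, Multiset.esymm_replicate]
  have hup : (N.choose (m + 1) : ℝ) * (m + 1) = N.choose m * (N - m) := by
    rw [← Nat.cast_sub hm]
    exact_mod_cast Nat.choose_succ_right_eq N m
  have hsucc : ((N + 1).choose (m + 1) : ℝ) * (m + 1) = (N + 1) * N.choose m := by
    exact_mod_cast (Nat.add_one_mul_choose_eq N m).symm
  have hpow : b ^ m ≤ (b + s) ^ m := pow_le_pow_left₀ hb (by linarith) m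
  have hcross : 0 ≤ s * ((N - m) - (m + 1) * q) := mul_nonneg hs (by linarith)
  refine le_of_mul_le_mul_right ?_ (by positivity : (0 : ℝ) < m + 1)
  calc ((N + 1).choose (m + 1) : ℝ) * b ^ (m + 1) * (m + 1)
      = N.choose m * b ^ m * ((N + 1) * b) := by rw [mul_right_comm, hsucc]; ring
    _ ≤ N.choose m * (b + s) ^ m * ((N + 1) * b + s * ((N - m) - (m + 1) * q)) := by
        gcongr; linarith
    _ = _ := by linear_combination -(b + s) ^ (m + 1) * hup

lemma choose_mul_pow_le_esymm'_of_map_eq {n k : ℕ} (hkn : k < n) {b T : ℝ} (hb : 0 ≤ b)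
    (hT : 0 ≤ T) {lam : Fin n → ℝ}
    (hlam : Finset.univ.val.map lam = (b - (1 - n / k) ^ 2 * T)
      ::ₘ Multiset.replicate (n - 1) (b - (1 - n / k) * T))
    {m : ℕ} (hm : 1 ≤ m) (hmk : m ≤ k) :
    (n.choose m : ℝ) * b ^ m ≤ esymm' n m lam := by
  obtain ⟨m, rfl⟩ : ∃ m', m = m' + 1 := ⟨m - 1, by omega⟩
  obtain ⟨N, rfl⟩ : ∃ N, n = N + 1 := ⟨n - 1, by omega⟩
  have hk : (0 : ℝ) < k := by exact_mod_cast (show 0 < k by omega)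
  have hmk' : (m : ℝ) + 1 ≤ k := by exact_mod_cast hmk
  have hkN : (k : ℝ) ≤ N + 1 := by exact_mod_cast hkn.le
  have hq : 1 - ((N + 1 : ℕ) : ℝ) / k = -((N + 1 - k) / k) := by push_cast; field_simp; ring
  rw [esymm'_eq_esymm, hlam, Nat.add_sub_cancel, hq, neg_sq, neg_mul, sub_neg_eq_add, sq,
    mul_assoc]
  refine choose_mul_pow_le_esymm_cons_replicate (by omega) hb (by positivity) ?_
  rw [← mul_div_assoc, div_le_iff₀ hk]
  nlinarith

lemma mem_Gamma_of_choose_mul_pow_le {n k : ℕ} (hkn : k < n) {b : ℝ} (hb : 0 < b)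
    {lam : Fin n → ℝ}
    (h : ∀ m, 1 ≤ m → m ≤ k → (n.choose m : ℝ) * b ^ m ≤ esymm' n m lam) :
    lam ∈ Gamma n k := fun m hm hmk =>
  lt_of_lt_of_le (by have := Nat.choose_pos (hmk.trans hkn.le); positivity) (h m hm hmk)

lemma choose_rpow_mul_le_esymm'_rpow {n k : ℕ} (hk : 1 ≤ k) {b : ℝ} (hb : 0 ≤ b)
    {lam : Fin n → ℝ} (h : (n.choose k : ℝ) * b ^ k ≤ esymm' n k lam) :
    (n.choose k : ℝ) ^ ((1 : ℝ) / k) * b ≤ esymm' n k lam ^ ((1 : ℝ) / k) := by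
  calc (n.choose k : ℝ) ^ ((1 : ℝ) / k) * b
      = ((n.choose k : ℝ) * b ^ k) ^ ((1 : ℝ) / k) := by
        rw [Real.mul_rpow (by positivity) (by positivity), one_div,
          Real.pow_rpow_inv_natCast hb (by omega)]
    _ ≤ esymm' n k lam ^ ((1 : ℝ) / k) := Real.rpow_le_rpow (by positivity) h (by positivity)

/-- For `w(z) = -|z|^{2-2n/k} + R^{2-2n/k} - 1 + a|z|²/R²` with `a > 0`, at every `z ≠ 0`
the complex Hessian eigenvalues lie in `Γ_k` and `H_k[w]^{1/k} ≥ C(n,k)^{1/k} a R^{-2}`. -/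
theorem stmt_10 (n k : ℕ) (hk : 1 ≤ k) (hkn : k < n) (a R : ℝ) (ha : 0 < a) (hR : 0 < R)
    (w : (Fin n → ℂ) → ℂ)
    (hw : ∀ z : Fin n → ℂ,
      w z = ((-((∑ i, Complex.normSq (z i)) ^ ((1 : ℝ) - (n : ℝ) / k))
        + R ^ ((2 : ℝ) - 2 * (n : ℝ) / k) - 1
        + a * (∑ i, Complex.normSq (z i)) / R ^ 2 : ℝ) : ℂ))
    (z : Fin n → ℂ) (hz : z ≠ 0) :
    ∃ hH : (cHess w z).IsHermitian,
      hH.eigenvalues ∈ Gamma n k ∧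
      esymm' n k hH.eigenvalues ^ ((1 : ℝ) / k)
        ≥ (n.choose k : ℝ) ^ ((1 : ℝ) / k) * a / R ^ 2 := by
  set p : ℝ := 1 - n / k
  have hb : 0 < a / R ^ 2 := by positivity
  have hw' : w = fun y =>
      ((-(sqNorm y ^ p) + (R ^ ((2 : ℝ) - 2 * n / k) - 1) + a / R ^ 2 * sqNorm y : ℝ) : ℂ) :=
    funext fun y => by rw [hw, sqNorm]; congr 1; ring
  rw [hw']
  have hH :=
    isHermitian_cHess_neg_rpow_add_linear p (R ^ ((2 : ℝ) - 2 * n / k) - 1) (a / R ^ 2) hz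
  have hT : 0 ≤ sqNorm z ^ (p - 1) := Real.rpow_nonneg (sqNorm_pos hz).le _
  have hS := fun m => choose_mul_pow_le_esymm'_of_map_eq (m := m) hkn hb.le hT
    (eigenvalues_cHess_neg_rpow_add_linear _ _ _ hz hH)
  refine ⟨hH, mem_Gamma_of_choose_mul_pow_le hkn hb hS, ?_⟩
  rw [ge_iff_le, mul_div_assoc]
  exact choose_rpow_mul_le_esymm'_rpow hk hb.le (hS k hk le_rfl)
end
end

section
/- Uniqueness given comparison: suppose u and v are continuous k-subharmonic functions on Ω \ {0} ⊂ ℂ^n, both solving (ddᶜw)^k ∧ ω^{n-k} = 0 there, with u = v = -1 on ∂Ω and u(z) + |z|^{2-2n/k} and v(z) + |z|^{2-2n/k} bounded near 0. Assuming the Błocki comparison principle (if (ddᶜu)^k∧ω^{n-k} ≥ (ddᶜv)^k∧ω^{n-k} on a bounded domain U and u ≤ v on ∂U then u ≤ v on U), one has u = v on Ω \ {0}. -/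
open scoped BigOperators
open scoped Topology
noncomputable section

lemma aux_le (n k : ℕ) (hk : 1 ≤ k) (hkn : k < n)
    (ksh zeroMA : Set (Fin n → ℂ) → ((Fin n → ℂ) → ℝ) → Prop)
    (hksh_mono : ∀ (U V : Set (Fin n → ℂ)) w, U ⊆ V → ksh V w → ksh U w)
    (hzero_mono : ∀ (U V : Set (Fin n → ℂ)) w, U ⊆ V → zeroMA V w → zeroMA U w)
    (hksh_smul : ∀ (U : Set (Fin n → ℂ)) w (t : ℝ), 0 < t → ksh U w → ksh U (fun z => t * w z))
    (hzero_smul : ∀ (U : Set (Fin n → ℂ)) w (t : ℝ), 0 < t → zeroMA U w → zeroMA U (fun z => t * w z))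
    (hcomp : ∀ U : Set (Fin n → ℂ), IsOpen U → Bornology.IsBounded U →
      ∀ w₁ w₂, ksh U w₁ → ksh U w₂ →
        ContinuousOn w₁ (closure U) → ContinuousOn w₂ (closure U) →
        zeroMA U w₁ → zeroMA U w₂ →
        (∀ z ∈ frontier U, w₁ z ≤ w₂ z) → ∀ z ∈ U, w₁ z ≤ w₂ z)
    (Ω : Set (Fin n → ℂ)) (hΩo : IsOpen Ω) (hΩb : Bornology.IsBounded Ω) (h0 : 0 ∈ Ω)
    (u v : (Fin n → ℂ) → ℝ)
    (hucont : ContinuousOn u (closure Ω \ {0})) (hvcont : ContinuousOn v (closure Ω \ {0}))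
    (hush : ksh (Ω \ {0}) u) (hvsh : ksh (Ω \ {0}) v)
    (huz : zeroMA (Ω \ {0}) u) (hvz : zeroMA (Ω \ {0}) v)
    (hub : ∀ z ∈ frontier Ω, u z = -1) (hvb : ∀ z ∈ frontier Ω, v z = -1)
    (husing : ∃ C r : ℝ, 0 < r ∧ ∀ z : Fin n → ℂ, z ≠ 0 → (∑ i, Complex.normSq (z i)) < r →
      |u z + (∑ i, Complex.normSq (z i)) ^ ((1 : ℝ) - (n : ℝ) / k)| ≤ C)
    (hvsing : ∃ C r : ℝ, 0 < r ∧ ∀ z : Fin n → ℂ, z ≠ 0 → (∑ i, Complex.normSq (z i)) < r →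
      |v z + (∑ i, Complex.normSq (z i)) ^ ((1 : ℝ) - (n : ℝ) / k)| ≤ C) :
    ∀ z ∈ Ω \ {0}, u z ≤ v z := by
  obtain ⟨Cu, ru, hru, hCu⟩ := husing
  obtain ⟨Cv, rv, hrv, hCv⟩ := hvsing
  set q : (Fin n → ℂ) → ℝ := fun z => ∑ i, Complex.normSq (z i) with hq
  have hqc : Continuous q := by
    apply continuous_finset_sum
    exact fun i _ => Complex.continuous_normSq.comp (continuous_apply i)
  have hqnonneg : ∀ z, 0 ≤ q z := fun z =>
    Finset.sum_nonneg fun i _ => Complex.normSq_nonneg _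
  have hqpos : ∀ z : Fin n → ℂ, z ≠ 0 → 0 < q z := by
    intro z hz
    obtain ⟨i, hi⟩ := Function.ne_iff.mp hz
    exact Finset.sum_pos' (fun j _ => Complex.normSq_nonneg _)
      ⟨i, Finset.mem_univ i, Complex.normSq_pos.mpr hi⟩
  set α : ℝ := (1 : ℝ) - (n : ℝ) / k with hαdef
  have hkpos : (0:ℝ) < k := by exact_mod_cast hk
  have hα : α < 0 := by
    have : (1:ℝ) < (n:ℝ) / k := (one_lt_div hkpos).mpr (by exact_mod_cast hkn)
    simp only [hαdef]; linarith
  intro z₀ hz₀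
  have hz₀Ω : z₀ ∈ Ω := hz₀.1
  have hz₀ne : z₀ ≠ 0 := hz₀.2
  have hqz₀ : 0 < q z₀ := hqpos z₀ hz₀ne
  have key : ∀ t : ℝ, t ∈ Set.Ioo (0:ℝ) 1 → u z₀ ≤ t * v z₀ := by
    rintro t ⟨ht0, ht1⟩
    set M : ℝ := max ((Cu + Cv) / (1 - t)) 1 with hMdef
    have hM1 : (1:ℝ) ≤ M := le_max_right _ _
    have hM0 : (0:ℝ) < M := lt_of_lt_of_le one_pos hM1
    set r₀ : ℝ := M ^ (1/α) with hr₀def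
    have hr₀pos : 0 < r₀ := Real.rpow_pos_of_pos hM0 _
    set r : ℝ := min r₀ (min (q z₀) (min ru rv)) / 2 with hrdef
    have hrpos : 0 < r := by
      apply div_pos _ two_pos
      exact lt_min hr₀pos (lt_min hqz₀ (lt_min hru hrv))
    have hr_le : r ≤ min r₀ (min (q z₀) (min ru rv)) / 2 := le_refl _
    have hr_lt_q : r < q z₀ := by
      have h1 : min r₀ (min (q z₀) (min ru rv)) ≤ q z₀ :=
        le_trans (min_le_right _ _) (min_le_left _ _)
      calc r ≤ q z₀ / 2 := by apply div_le_div_of_nonneg_right h1 (by norm_num : (0:ℝ) ≤ 2)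
        _ < q z₀ := by linarith
    have hr_lt_ru : r < ru := by
      have h1 : min r₀ (min (q z₀) (min ru rv)) ≤ ru :=
        le_trans (min_le_right _ _) (le_trans (min_le_right _ _) (min_le_left _ _))
      calc r ≤ ru / 2 := div_le_div_of_nonneg_right h1 (by norm_num : (0:ℝ) ≤ 2)
        _ < ru := by linarith
    have hr_lt_rv : r < rv := by
      have h1 : min r₀ (min (q z₀) (min ru rv)) ≤ rv :=
        le_trans (min_le_right _ _) (le_trans (min_le_right _ _) (min_le_right _ _))
      calc r ≤ rv / 2 := div_le_div_of_nonneg_right h1 (by norm_num : (0:ℝ) ≤ 2)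
        _ < rv := by linarith
    have hr_le_r₀ : r ≤ r₀ := by
      have h1 : min r₀ (min (q z₀) (min ru rv)) ≤ r₀ := min_le_left _ _
      calc r ≤ r₀ / 2 := div_le_div_of_nonneg_right h1 (by norm_num : (0:ℝ) ≤ 2)
        _ ≤ r₀ := by linarith
    have hMrα : M ≤ r ^ α := by
      have h1 : r₀ ^ α = M := by
        rw [hr₀def, ← Real.rpow_mul hM0.le, one_div_mul_cancel hα.ne, Real.rpow_one]
      have h2 : r₀ ^ α ≤ r ^ α := Real.rpow_le_rpow_of_nonpos hrpos hr_le_r₀ hα.le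
      linarith
    set U : Set (Fin n → ℂ) := Ω ∩ {z | r < q z} with hUdef
    have hUo : IsOpen U := hΩo.inter (isOpen_lt continuous_const hqc)
    have hUb : Bornology.IsBounded U := hΩb.subset Set.inter_subset_left
    have hUsub : U ⊆ Ω \ {0} := by
      rintro z ⟨hzΩ, hzq⟩
      refine ⟨hzΩ, ?_⟩
      simp only [Set.mem_singleton_iff]
      intro h
      rw [h] at hzq
      simp only [Set.mem_setOf_eq, hq] at hzq
      simp at hzq
      linarith
    have hclU : closure U ⊆ closure Ω ∩ {z | r ≤ q z} := by
      apply closure_minimal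
      · rintro z ⟨h1, h2⟩
        refine ⟨subset_closure h1, ?_⟩
        show r ≤ q z
        exact le_of_lt h2
      · exact (isClosed_closure).inter (isClosed_le continuous_const hqc)
    have hclU' : closure U ⊆ closure Ω \ {0} := by
      intro z hz
      obtain ⟨h1, h2⟩ := hclU hz
      refine ⟨h1, ?_⟩
      simp only [Set.mem_singleton_iff]
      intro h
      rw [h] at h2
      simp only [Set.mem_setOf_eq, hq] at h2
      simp at h2
      linarith
    have hbd : ∀ z ∈ frontier U, u z ≤ t * v z := by
      intro z hz
      rw [hUo.frontier_eq] at hz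
      obtain ⟨hzc, hznU⟩ := hz
      have hzΩc : z ∈ closure Ω := (hclU hzc).1
      have hzq : r ≤ q z := (hclU hzc).2
      have hzne : z ≠ 0 := by
        intro h
        rw [h] at hzq
        simp only [hq] at hzq
        simp at hzq
        linarith
      by_cases hzΩ : z ∈ Ω
      · -- inner sphere: q z = r
        have hqz : q z = r := by
          by_contra h
          exact hznU ⟨hzΩ, lt_of_le_of_ne hzq (Ne.symm h)⟩
        have hu := hCu z hzne (by show q z < ru; rw [hqz]; exact hr_lt_ru)
        have hv := hCv z hzne (by show q z < rv; rw [hqz]; exact hr_lt_rv)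
        rw [show (∑ i, Complex.normSq (z i)) = r from hqz] at hu hv
        rw [abs_le] at hu hv
        have hCv0 : 0 ≤ Cv := le_trans (abs_nonneg _) (abs_le.mpr hv)
        have hA : 0 < r ^ α := Real.rpow_pos_of_pos hrpos _
        have hMain : Cu + Cv ≤ (1 - t) * (r ^ α) := by
          have h1 : (Cu + Cv) / (1 - t) ≤ M := le_max_left _ _
          have h2 : (Cu + Cv) / (1 - t) ≤ r ^ α := le_trans h1 hMrα
          have h3 : (0:ℝ) < 1 - t := by linarith
          calc Cu + Cv = (Cu + Cv) / (1 - t) * (1 - t) := by field_simp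
            _ ≤ r ^ α * (1 - t) := by
                apply mul_le_mul_of_nonneg_right h2 h3.le
            _ = (1 - t) * (r ^ α) := by ring
        nlinarith [hu.2, hv.1, mul_le_mul_of_nonneg_left hv.1 ht0.le]
      · have hzf : z ∈ frontier Ω := by
          rw [frontier, hΩo.interior_eq]
          exact ⟨hzΩc, hzΩ⟩
        rw [hub z hzf, hvb z hzf]
        linarith
    have := hcomp U hUo hUb u (fun z => t * v z)
      (hksh_mono U (Ω \ {0}) u hUsub hush)
      (hksh_mono U (Ω \ {0}) _ hUsub (hksh_smul _ v t ht0 hvsh))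
      (hucont.mono hclU')
      ((continuousOn_const.mul hvcont).mono hclU')
      (hzero_mono U (Ω \ {0}) u hUsub huz)
      (hzero_mono U (Ω \ {0}) _ hUsub (hzero_smul _ v t ht0 hvz))
      hbd z₀ ⟨hz₀Ω, hr_lt_q⟩
    exact this
  -- limit t → 1
  have hne : (𝓝[Set.Ioo (0:ℝ) 1] (1:ℝ)).NeBot := by
    apply mem_closure_iff_nhdsWithin_neBot.mp
    rw [closure_Ioo (by norm_num : (0:ℝ) ≠ 1)]
    exact ⟨by norm_num, le_refl 1⟩
  have ht : Filter.Tendsto (fun t : ℝ => t * v z₀) (𝓝[Set.Ioo (0:ℝ) 1] 1) (𝓝 (v z₀)) := by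
    have h := (continuous_mul_right (v z₀)).tendsto 1
    simpa using h.mono_left nhdsWithin_le_nhds
  exact ge_of_tendsto ht (Filter.eventually_of_mem self_mem_nhdsWithin fun t ht' => key t ht')


/-- Uniqueness given the Błocki comparison principle: two continuous `k`-subharmonic
solutions of the homogeneous complex `k`-Hessian equation on `Ω \ {0}` with boundary value
`-1` and behavior `-|z|^{2-2n/k} + O(1)` at the origin coincide. Here `ksh U w` abstracts
"`w` is `k`-subharmonic on `U`" and `zeroMA U w` abstracts "`(ddᶜw)^k ∧ ω^{n-k} = 0` on `U`". -/
theorem stmt_16 (n k : ℕ) (hk : 1 ≤ k) (hkn : k < n)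
    (ksh zeroMA : Set (Fin n → ℂ) → ((Fin n → ℂ) → ℝ) → Prop)
    (hksh_mono : ∀ (U V : Set (Fin n → ℂ)) w, U ⊆ V → ksh V w → ksh U w)
    (hzero_mono : ∀ (U V : Set (Fin n → ℂ)) w, U ⊆ V → zeroMA V w → zeroMA U w)
    (hksh_smul : ∀ (U : Set (Fin n → ℂ)) w (t : ℝ), 0 < t → ksh U w → ksh U (fun z => t * w z))
    (hzero_smul : ∀ (U : Set (Fin n → ℂ)) w (t : ℝ), 0 < t → zeroMA U w → zeroMA U (fun z => t * w z))
    (hcomp : ∀ U : Set (Fin n → ℂ), IsOpen U → Bornology.IsBounded U →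
      ∀ w₁ w₂, ksh U w₁ → ksh U w₂ →
        ContinuousOn w₁ (closure U) → ContinuousOn w₂ (closure U) →
        zeroMA U w₁ → zeroMA U w₂ →
        (∀ z ∈ frontier U, w₁ z ≤ w₂ z) → ∀ z ∈ U, w₁ z ≤ w₂ z)
    (Ω : Set (Fin n → ℂ)) (hΩo : IsOpen Ω) (hΩb : Bornology.IsBounded Ω) (h0 : 0 ∈ Ω)
    (u v : (Fin n → ℂ) → ℝ)
    (hucont : ContinuousOn u (closure Ω \ {0})) (hvcont : ContinuousOn v (closure Ω \ {0}))
    (hush : ksh (Ω \ {0}) u) (hvsh : ksh (Ω \ {0}) v)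
    (huz : zeroMA (Ω \ {0}) u) (hvz : zeroMA (Ω \ {0}) v)
    (hub : ∀ z ∈ frontier Ω, u z = -1) (hvb : ∀ z ∈ frontier Ω, v z = -1)
    (husing : ∃ C r : ℝ, 0 < r ∧ ∀ z : Fin n → ℂ, z ≠ 0 → (∑ i, Complex.normSq (z i)) < r →
      |u z + (∑ i, Complex.normSq (z i)) ^ ((1 : ℝ) - (n : ℝ) / k)| ≤ C)
    (hvsing : ∃ C r : ℝ, 0 < r ∧ ∀ z : Fin n → ℂ, z ≠ 0 → (∑ i, Complex.normSq (z i)) < r →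
      |v z + (∑ i, Complex.normSq (z i)) ^ ((1 : ℝ) - (n : ℝ) / k)| ≤ C) :
    ∀ z ∈ Ω \ {0}, u z = v z := by
  intro z hz
  exact le_antisymm
    (aux_le n k hk hkn ksh zeroMA hksh_mono hzero_mono hksh_smul hzero_smul hcomp
      Ω hΩo hΩb h0 u v hucont hvcont hush hvsh huz hvz hub hvb husing hvsing z hz)
    (aux_le n k hk hkn ksh zeroMA hksh_mono hzero_mono hksh_smul hzero_smul hcomp
      Ω hΩo hΩb h0 v u hvcont hucont hvsh hush hvz huz hvb hub hvsing husing z hz)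
end
end
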